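/- Let α ∈ (0, 1/2). There exists a constant C ≥ 0, depending only on N, K, α and Ω₁, …, Ω_N, such that for every ε > 0 and every global classical solution Θᵉ : [0, ∞) → ℝ^N of the regularized Kuramoto system with kernel h_ε, one has |Θ̇ᵉ(t)| ≤ C for all t ≥ 0 and |Θ̇ᵉ(t) − Θ̇ᵉ(s)| ≤ C·|t − s|^{1−2α} for all s, t ≥ 0. -/

import Mathlib

open Real Set Filter Topology MeasureTheory

/-- The orthodromic distance of `θ` to `0` on the circle: `|θ̄|` where
`θ̄ ≡ θ (mod 2π)`, `θ̄ ∈ (−π, π]`. -/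
noncomputable def orthoDist (θ : ℝ) : ℝ := |θ - 2 * Real.pi * (round (θ / (2 * Real.pi)) : ℝ)|

/-- The singular interaction kernel `h(θ) = sin θ / |θ|_o^{2α}` (equal to `0` on `2πℤ`,
by the junk value convention `x / 0 = 0`). -/
noncomputable def hker (α θ : ℝ) : ℝ := Real.sin θ / orthoDist θ ^ (2 * α)
/-- The regularized interaction kernel `h_ε(θ) = sin θ / (ε² + |θ|_o²)^α`. -/
noncomputable def hkerEps (α ε θ : ℝ) : ℝ := Real.sin θ / (ε ^ 2 + orthoDist θ ^ 2) ^ α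

/-- The regularized Kuramoto vector field. -/
noncomputable def HvecEps (N : ℕ) (K α ε : ℝ) (Ω : Fin N → ℝ)
    (Θ : EuclideanSpace ℝ (Fin N)) : EuclideanSpace ℝ (Fin N) :=
  WithLp.toLp 2 (fun i => Ω i + (K / (N : ℝ)) * ∑ j, hkerEps α ε (Θ j - Θ i))

lemma round_min (x : ℝ) (k : ℤ) : |x - round x| ≤ |x - k| := by
  rcases eq_or_ne k (round x) with rfl | h
  · exact le_rfl
  · have h1 : (1 : ℝ) ≤ |(round x : ℝ) - k| := by
      have : round x - k ≠ 0 := sub_ne_zero.2 (by exact_mod_cast (Ne.symm h))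
      calc (1:ℝ) ≤ |(round x - k : ℤ)| := by exact_mod_cast Int.one_le_abs this
        _ = |(round x : ℝ) - k| := by push_cast; ring_nf
    have h2 := abs_sub_round x
    have h3 : |(round x : ℝ) - k| ≤ |round x - x| + |x - k| := abs_sub_le _ _ _
    have h4 : |(round x : ℝ) - x| = |x - round x| := abs_sub_comm _ _
    linarith

lemma orthoDist_le (θ : ℝ) (k : ℤ) : orthoDist θ ≤ |θ - 2 * π * k| := by
  have h2 : (0:ℝ) < 2 * π := by positivity
  have e : ∀ m : ℤ, |θ - 2 * π * m| = 2 * π * |θ / (2*π) - m| := by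
    intro m
    have hm : 2 * π * (θ / (2*π) - m) = θ - 2*π*m := by field_simp
    rw [← hm, abs_mul, abs_of_pos h2]
  rw [orthoDist, e, e]
  exact mul_le_mul_of_nonneg_left (round_min _ k) (le_of_lt h2)

lemma orthoDist_nonneg (θ : ℝ) : 0 ≤ orthoDist θ := abs_nonneg _

lemma orthoDist_le_pi (θ : ℝ) : orthoDist θ ≤ π := by
  have h2 : (0:ℝ) < 2 * π := by positivity
  have : orthoDist θ = 2 * π * |θ / (2*π) - round (θ / (2*π))| := by
    have hm : 2 * π * (θ / (2*π) - round (θ / (2*π))) = θ - 2*π*round (θ / (2*π)) := by field_simp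
    rw [orthoDist, ← hm, abs_mul, abs_of_pos h2]
  rw [this]
  have := abs_sub_round (θ / (2*π))
  nlinarith [pi_pos]

lemma orthoDist_lip (x y : ℝ) : |orthoDist x - orthoDist y| ≤ |x - y| := by
  have key : ∀ a b : ℝ, orthoDist a ≤ |a - b| + orthoDist b := by
    intro a b
    calc orthoDist a ≤ |a - 2 * π * round (b / (2*π))| := orthoDist_le a _
      _ ≤ |a - b| + |b - 2 * π * round (b / (2*π))| := by
          have := abs_sub_le a b (2 * π * (round (b / (2*π)) : ℝ)); linarith
      _ = |a - b| + orthoDist b := rfl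
  have h1 := key x y
  have h2 := key y x
  rw [abs_sub_comm y x] at h2
  rw [abs_le]; constructor <;> linarith

lemma abs_sin_le_orthoDist (θ : ℝ) : |Real.sin θ| ≤ orthoDist θ := by
  set k := round (θ / (2 * π))
  have : Real.sin θ = Real.sin (θ - 2 * π * k) := by
    rw [← Real.sin_add_int_mul_two_pi (θ - 2 * π * k) k]; ring_nf
  rw [this]
  exact (Real.abs_sin_le_abs).trans_eq rfl


lemma hker_bound {α : ℝ} (hα : 0 < α) (hα2 : α < 1/2) (ε θ : ℝ) (hε : 0 < ε) :
    |hkerEps α ε θ| ≤ orthoDist θ ^ (1 - 2*α) := by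
  set r := orthoDist θ with hr
  have hr0 : 0 ≤ r := orthoDist_nonneg θ
  have hD : (0:ℝ) < ε ^ 2 + r ^ 2 := by positivity
  have hDα : (0:ℝ) < (ε ^ 2 + r ^ 2) ^ α := Real.rpow_pos_of_pos hD α
  rcases eq_or_lt_of_le hr0 with h0 | hrpos
  · have hsin : Real.sin θ = 0 := by
      have := abs_sin_le_orthoDist θ
      rw [← hr, ← h0] at this
      exact abs_eq_zero.1 (le_antisymm this (abs_nonneg _))
    rw [hkerEps, hsin, zero_div, abs_zero, ← h0]
    rw [Real.zero_rpow (by linarith : (1:ℝ) - 2*α ≠ 0)]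
  · have key : r ^ (2*α) ≤ (ε ^ 2 + r ^ 2) ^ α := by
      have h1 : r ^ (2*α) = (r ^ (2:ℕ)) ^ α := by
        rw [← Real.rpow_natCast r 2, ← Real.rpow_mul hr0]
        norm_num
      rw [h1]
      exact Real.rpow_le_rpow (by positivity) (by nlinarith) hα.le
    have h2 : |hkerEps α ε θ| = |Real.sin θ| / (ε ^ 2 + r ^ 2) ^ α := by
      rw [hkerEps, abs_div, abs_of_pos hDα]
    rw [h2]
    calc |Real.sin θ| / (ε ^ 2 + r ^ 2) ^ α ≤ r / r ^ (2*α) :=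
          div_le_div₀ hr0 (abs_sin_le_orthoDist θ) (Real.rpow_pos_of_pos hrpos _) key
      _ = r ^ (1 - 2*α) := by
          rw [Real.rpow_sub hrpos, Real.rpow_one]

lemma hker_pi_bound {α : ℝ} (hα : 0 < α) (hα2 : α < 1/2) (ε θ : ℝ) (hε : 0 < ε) :
    |hkerEps α ε θ| ≤ π := by
  refine (hker_bound hα hα2 ε θ hε).trans ?_
  calc orthoDist θ ^ (1 - 2*α) ≤ π ^ (1 - 2*α) :=
        Real.rpow_le_rpow (orthoDist_nonneg θ) (orthoDist_le_pi θ) (by linarith)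
    _ ≤ π ^ (1:ℝ) := Real.rpow_le_rpow_of_exponent_le (by linarith [Real.pi_gt_three]) (by linarith)
    _ = π := Real.rpow_one π

lemma phi_lip {α : ℝ} (hα : 0 < α) (ε m : ℝ) (hε : 0 < ε) (hm : 0 < m) :
    ∀ r ∈ Ici m, ∀ s ∈ Ici m,
      |(ε^2+r^2)^(-α) - (ε^2+s^2)^(-α)| ≤ (2*α*m^(-(1+2*α))) * |r - s| := by
  intro r hrm s hsm
  have hderiv : ∀ z ∈ Ici m, HasDerivWithinAt (fun w => (ε^2+w^2)^(-α))
      ((↑2 * z ^ 1) * (-α) * (ε^2+z^2) ^ (-α - 1)) (Ici m) z := by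
    intro z hz
    have hz2 : (0:ℝ) < ε^2 + z^2 := by positivity
    have h1 : HasDerivAt (fun w : ℝ => ε^2 + w^2) (↑2 * z ^ 1) z :=
      (hasDerivAt_pow 2 z).const_add (ε^2)
    exact (h1.rpow_const (Or.inl hz2.ne')).hasDerivWithinAt
  have hbound : ∀ z ∈ Ici m, ‖(↑2 * z ^ 1) * (-α) * (ε^2+z^2) ^ (-α - 1)‖ ≤ 2*α*m^(-(1+2*α)) := by
    intro z hz
    have hzm : m ≤ z := hz
    have hz0 : 0 < z := lt_of_lt_of_le hm hzm
    have hz2 : (0:ℝ) < z^2 := by positivity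
    have e1 : (ε^2+z^2) ^ (-α - 1) ≤ (z^(2:ℕ)) ^ (-α - 1) :=
      Real.rpow_le_rpow_of_nonpos hz2 (by nlinarith) (by linarith)
    have e2 : (z^(2:ℕ)) ^ (-α-1) = z ^ (-2*α-2) := by
      rw [← Real.rpow_natCast z 2, ← Real.rpow_mul hz0.le]
      norm_num; ring_nf
    have e3 : z * z ^ (-2*α-2) = z ^ (-2*α-1) := by
      nth_rewrite 1 [← Real.rpow_one z]
      rw [← Real.rpow_add hz0]; ring_nf
    have e4 : z ^ (-2*α-1) ≤ m ^ (-2*α-1) :=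
      Real.rpow_le_rpow_of_nonpos hm hzm (by linarith)
    have e5 : m ^ (-2*α-1) = m ^ (-(1+2*α)) := by ring_nf
    have hpos : 0 ≤ (ε^2+z^2) ^ (-α - 1) := Real.rpow_nonneg (by positivity) _
    have hv : (↑2 * z ^ 1) * (-α) * (ε^2+z^2) ^ (-α - 1)
        = -(2 * α * (z * (ε^2+z^2) ^ (-α - 1))) := by ring
    have : ‖(↑2 * z ^ 1) * (-α) * (ε^2+z^2) ^ (-α - 1)‖
        = 2 * α * (z * (ε^2+z^2) ^ (-α - 1)) := by
      rw [Real.norm_eq_abs, hv, abs_neg,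
        abs_of_nonneg (mul_nonneg (by linarith) (mul_nonneg hz0.le hpos))]
    rw [this]
    have : z * (ε^2+z^2) ^ (-α - 1) ≤ m ^ (-(1+2*α)) := by
      calc z * (ε^2+z^2) ^ (-α - 1) ≤ z * (z^(2:ℕ)) ^ (-α-1) :=
            mul_le_mul_of_nonneg_left e1 hz0.le
        _ = z ^ (-2*α-1) := by rw [e2]; exact e3
        _ ≤ m ^ (-(1+2*α)) := by rw [← e5]; exact e4
    exact mul_le_mul_of_nonneg_left this (by linarith)
  have := (convex_Ici m).norm_image_sub_le_of_norm_hasDerivWithin_le hderiv hbound hsm hrm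
  simpa [Real.norm_eq_abs, abs_sub_comm] using this

lemma hker_holder {α : ℝ} (hα : 0 < α) (hα2 : α < 1/2) (ε : ℝ) (hε : 0 < ε) (x y : ℝ) :
    |hkerEps α ε x - hkerEps α ε y| ≤ 6 * |x - y| ^ (1 - 2*α) := by
  rcases eq_or_ne x y with rfl | hxy
  · simp [Real.rpow_nonneg]
  set δ := |x - y| with hδdef
  have hδ : 0 < δ := abs_pos.2 (sub_ne_zero.2 hxy)
  set r := orthoDist x with hrdef
  set s := orthoDist y with hsdef
  have hr0 : 0 ≤ r := orthoDist_nonneg x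
  have hs0 : 0 ≤ s := orthoDist_nonneg y
  have hrs : |r - s| ≤ δ := orthoDist_lip x y
  have hβpos : (0:ℝ) < 1 - 2*α := by linarith
  have hQ0 : 0 ≤ δ ^ (1 - 2*α) := Real.rpow_nonneg hδ.le _
  set m := min r s with hmdef
  by_cases hm : m ≤ 2*δ
  · -- near the singularity: use size bounds
    have h1 : r ≤ 3*δ := by
      rcases le_total r s with h | h
      · have : m = r := min_eq_left h
        linarith
      · have : m = s := min_eq_right h
        have := abs_le.1 hrs
        linarith [this.2]
    have h2 : s ≤ 3*δ := by
      rcases le_total r s with h | h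
      · have : m = r := min_eq_left h
        have := abs_le.1 hrs
        linarith [this.1]
      · have : m = s := min_eq_right h
        linarith
    have b1 : |hkerEps α ε x| ≤ (3*δ) ^ (1-2*α) :=
      (hker_bound hα hα2 ε x hε).trans (Real.rpow_le_rpow hr0 h1 hβpos.le)
    have b2 : |hkerEps α ε y| ≤ (3*δ) ^ (1-2*α) :=
      (hker_bound hα hα2 ε y hε).trans (Real.rpow_le_rpow hs0 h2 hβpos.le)
    have b3 : (3*δ) ^ (1-2*α) ≤ 3 * δ ^ (1-2*α) := by
      rw [Real.mul_rpow (by norm_num) hδ.le]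
      have : (3:ℝ) ^ (1-2*α) ≤ (3:ℝ) ^ (1:ℝ) :=
        Real.rpow_le_rpow_of_exponent_le (by norm_num) (by linarith)
      rw [Real.rpow_one] at this
      exact mul_le_mul_of_nonneg_right this hQ0
    calc |hkerEps α ε x - hkerEps α ε y| ≤ |hkerEps α ε x| + |hkerEps α ε y| :=
          abs_sub _ _
      _ ≤ 6 * δ ^ (1 - 2*α) := by linarith
  · -- away from the singularity: use smoothness
    push_neg at hm
    have hm0 : 0 < m := lt_trans (by linarith) hm
    have hmr : m ≤ r := min_le_left _ _
    have hms : m ≤ s := min_le_right _ _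
    have hr0' : 0 < r := lt_of_lt_of_le hm0 hmr
    have hs0' : 0 < s := lt_of_lt_of_le hm0 hms
    have hδm : δ ≤ m := by linarith
    have hδr : δ ≤ r := hδm.trans hmr
    -- rewrite kernels as products
    have hDx : (0:ℝ) < ε^2 + r^2 := by positivity
    have hDy : (0:ℝ) < ε^2 + s^2 := by positivity
    have ex : hkerEps α ε x = Real.sin x * (ε^2 + r^2) ^ (-α) := by
      rw [hkerEps, Real.rpow_neg hDx.le, div_eq_mul_inv]
    have ey : hkerEps α ε y = Real.sin y * (ε^2 + s^2) ^ (-α) := by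
      rw [hkerEps, Real.rpow_neg hDy.le, div_eq_mul_inv]
    have hsplit : hkerEps α ε x - hkerEps α ε y
        = (Real.sin x - Real.sin y) * (ε^2 + r^2) ^ (-α)
          + Real.sin y * ((ε^2 + r^2) ^ (-α) - (ε^2 + s^2) ^ (-α)) := by
      rw [ex, ey]; ring
    -- Term 1
    have hsinlip : |Real.sin x - Real.sin y| ≤ δ := by
      rw [Real.sin_sub_sin]
      rw [abs_mul, abs_mul]
      have h1 : |Real.sin ((x - y) / 2)| ≤ |(x - y) / 2| := Real.abs_sin_le_abs
      have h2 : |Real.cos ((x + y) / 2)| ≤ 1 := Real.abs_cos_le_one _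
      have h3 : |(x - y) / 2| = δ / 2 := by rw [abs_div]; simp [hδdef]
      calc |(2:ℝ)| * |Real.sin ((x - y) / 2)| * |Real.cos ((x + y) / 2)|
          ≤ |(2:ℝ)| * |(x - y) / 2| * 1 := by
            apply mul_le_mul _ h2 (abs_nonneg _) (by positivity)
            exact mul_le_mul_of_nonneg_left h1 (abs_nonneg _)
        _ = δ := by rw [h3]; rw [abs_of_pos (by norm_num : (0:ℝ) < 2)]; ring
    have hE1 : (ε^2 + r^2) ^ (-α) ≤ δ ^ (-(2*α)) := by
      calc (ε^2 + r^2) ^ (-α) ≤ (r^2) ^ (-α) :=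
            Real.rpow_le_rpow_of_nonpos (by positivity) (by nlinarith) (by linarith)
        _ = r ^ (-(2*α)) := by
            rw [← Real.rpow_natCast r 2, ← Real.rpow_mul hr0]
            norm_num
        _ ≤ δ ^ (-(2*α)) :=
            Real.rpow_le_rpow_of_nonpos hδ hδr (by linarith)
    have hQeq : δ * δ ^ (-(2*α)) = δ ^ (1 - 2*α) := by
      nth_rewrite 1 [← Real.rpow_one δ]
      rw [← Real.rpow_add hδ]
      ring_nf
    have hT1 : |(Real.sin x - Real.sin y) * (ε^2 + r^2) ^ (-α)| ≤ δ ^ (1-2*α) := by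
      rw [abs_mul, abs_of_nonneg (Real.rpow_nonneg hDx.le _)]
      calc |Real.sin x - Real.sin y| * (ε^2 + r^2) ^ (-α) ≤ δ * δ ^ (-(2*α)) :=
            mul_le_mul hsinlip hE1 (Real.rpow_nonneg hDx.le _) hδ.le
        _ = δ ^ (1-2*α) := hQeq
    -- Term 2
    have hphi := phi_lip hα ε m hε hm0 r hmr s hms
    have hsy : |Real.sin y| ≤ s := abs_sin_le_orthoDist y
    have hs32 : s ≤ (3/2) * m := by
      have := abs_le.1 hrs
      rcases le_total r s with h | h
      · have hmr' : m = r := min_eq_left h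
        linarith [this.1]
      · have hms' : m = s := min_eq_right h
        linarith
    have hmm : m * m ^ (-(1+2*α)) = m ^ (-(2*α)) := by
      nth_rewrite 1 [← Real.rpow_one m]
      rw [← Real.rpow_add hm0]
      ring_nf
    have hmδ : m ^ (-(2*α)) ≤ δ ^ (-(2*α)) :=
      Real.rpow_le_rpow_of_nonpos hδ hδm (by linarith)
    have hT2 : |Real.sin y * ((ε^2 + r^2) ^ (-α) - (ε^2 + s^2) ^ (-α))| ≤ 5 * δ ^ (1-2*α) := by
      rw [abs_mul]
      have step1 : |Real.sin y| * |(ε^2 + r^2) ^ (-α) - (ε^2 + s^2) ^ (-α)|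
          ≤ ((3/2) * m) * ((2*α*m^(-(1+2*α))) * δ) := by
        apply mul_le_mul (hsy.trans hs32)
        · exact hphi.trans (by
            apply mul_le_mul_of_nonneg_left hrs
            positivity)
        · exact abs_nonneg _
        · positivity
      have step2 : ((3/2) * m) * ((2*α*m^(-(1+2*α))) * δ) = 3*α * (m * m^(-(1+2*α))) * δ := by
        ring
      have step3 : 3*α * (m * m^(-(1+2*α))) * δ ≤ 3*α * (δ ^ (-(2*α))) * δ := by
        rw [hmm]
        have := mul_le_mul_of_nonneg_left hmδ (by linarith : (0:ℝ) ≤ 3*α)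
        exact mul_le_mul_of_nonneg_right this hδ.le
      have step4 : 3*α * (δ ^ (-(2*α))) * δ = 3*α * δ ^ (1-2*α) := by
        rw [mul_assoc, mul_comm (δ ^ (-(2*α))) δ, hQeq]
      have step5 : 3*α * δ ^ (1-2*α) ≤ 5 * δ ^ (1-2*α) := by
        apply mul_le_mul_of_nonneg_right _ hQ0
        linarith
      calc |Real.sin y| * |(ε^2 + r^2) ^ (-α) - (ε^2 + s^2) ^ (-α)|
          ≤ ((3/2) * m) * ((2*α*m^(-(1+2*α))) * δ) := step1
        _ = 3*α * (m * m^(-(1+2*α))) * δ := step2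
        _ ≤ 3*α * (δ ^ (-(2*α))) * δ := step3
        _ = 3*α * δ ^ (1-2*α) := step4
        _ ≤ 5 * δ ^ (1-2*α) := step5
    calc |hkerEps α ε x - hkerEps α ε y|
        ≤ |(Real.sin x - Real.sin y) * (ε^2 + r^2) ^ (-α)|
          + |Real.sin y * ((ε^2 + r^2) ^ (-α) - (ε^2 + s^2) ^ (-α))| := by
          rw [hsplit]; exact abs_add_le _ _
      _ ≤ 6 * δ ^ (1-2*α) := by linarith


lemma euclid_norm_le {N : ℕ} (v : EuclideanSpace ℝ (Fin N)) (B : ℝ) (hB : 0 ≤ B)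
    (h : ∀ i, |v i| ≤ B) : ‖v‖ ≤ Real.sqrt N * B := by
  rw [EuclideanSpace.norm_eq]
  have h1 : ∑ i, ‖v i‖ ^ 2 ≤ (N : ℝ) * B ^ 2 := by
    calc ∑ i, ‖v i‖ ^ 2 ≤ ∑ _i : Fin N, B ^ 2 := by
          apply Finset.sum_le_sum
          intro i _
          have := h i
          rw [Real.norm_eq_abs]
          nlinarith [abs_nonneg (v i)]
      _ = (N : ℝ) * B ^ 2 := by
          rw [Finset.sum_const, Finset.card_univ, Fintype.card_fin]
          simp [nsmul_eq_mul]
  calc Real.sqrt (∑ i, ‖v i‖ ^ 2) ≤ Real.sqrt ((N : ℝ) * B ^ 2) := Real.sqrt_le_sqrt h1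
    _ = Real.sqrt N * B := by
        rw [Real.sqrt_mul (Nat.cast_nonneg N), Real.sqrt_sq hB]

lemma comp_bound {N : ℕ} {K α ε : ℝ} (hK : 0 < K) (hα : 0 < α) (hα2 : α < 1/2) (hε : 0 < ε)
    (Ω : Fin N → ℝ) (Φ : EuclideanSpace ℝ (Fin N)) (i : Fin N) :
    |HvecEps N K α ε Ω Φ i| ≤ (∑ j, |Ω j|) + K * π := by
  have hN : (0:ℝ) < N := by exact_mod_cast i.pos
  have hΩ : |Ω i| ≤ ∑ j, |Ω j| :=
    Finset.single_le_sum (fun j _ => abs_nonneg (Ω j)) (Finset.mem_univ i)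
  have hsum : |∑ j, hkerEps α ε (Φ j - Φ i)| ≤ (N : ℝ) * π := by
    calc |∑ j, hkerEps α ε (Φ j - Φ i)| ≤ ∑ j, |hkerEps α ε (Φ j - Φ i)| :=
          Finset.abs_sum_le_sum_abs _ _
      _ ≤ ∑ _j : Fin N, π := Finset.sum_le_sum fun j _ => hker_pi_bound hα hα2 ε _ hε
      _ = (N : ℝ) * π := by
          rw [Finset.sum_const, Finset.card_univ, Fintype.card_fin]
          simp [nsmul_eq_mul]
  calc |HvecEps N K α ε Ω Φ i| ≤ |Ω i| + (K / N) * |∑ j, hkerEps α ε (Φ j - Φ i)| := by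
        rw [HvecEps, PiLp.toLp_apply]
        refine (abs_add_le _ _).trans ?_
        rw [abs_mul, abs_of_pos (by positivity : (0:ℝ) < K / N)]
    _ ≤ |Ω i| + (K / N) * ((N : ℝ) * π) := by
        have := mul_le_mul_of_nonneg_left hsum (by positivity : (0:ℝ) ≤ K / N)
        linarith
    _ = |Ω i| + K * π := by field_simp
    _ ≤ (∑ j, |Ω j|) + K * π := by linarith


/-- uniform-in-`ε` a priori estimates for the frequencies of solutions of the
regularized Kuramoto system in the subcritical regime `α ∈ (0, 1/2)`: uniform boundedness and
uniform `(1−2α)`-Hölder continuity of `Θ̇ᵉ`. -/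
theorem statement8 (N : ℕ) (K α : ℝ) (hK : 0 < K) (hα : α ∈ Ioo (0 : ℝ) (1 / 2))
    (Ω : Fin N → ℝ) :
    ∃ C : ℝ, 0 ≤ C ∧ ∀ ε : ℝ, 0 < ε → ∀ Θ : ℝ → EuclideanSpace ℝ (Fin N),
      (∀ t ∈ Ici (0 : ℝ), ∀ i, HasDerivWithinAt (fun s => Θ s i)
        (HvecEps N K α ε Ω (Θ t) i) (Ici (0 : ℝ)) t) →
      (∀ t ∈ Ici (0 : ℝ), ‖HvecEps N K α ε Ω (Θ t)‖ ≤ C) ∧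
      (∀ s ∈ Ici (0 : ℝ), ∀ t ∈ Ici (0 : ℝ),
        ‖HvecEps N K α ε Ω (Θ t) - HvecEps N K α ε Ω (Θ s)‖ ≤ C * |t - s| ^ (1 - 2 * α)) := by
  obtain ⟨hα1, hα2⟩ := hα
  set A : ℝ := (∑ j, |Ω j|) + K * π with hAdef
  have hA : 0 ≤ A := by
    have : (0:ℝ) ≤ ∑ j, |Ω j| := Finset.sum_nonneg fun j _ => abs_nonneg _
    have := Real.pi_pos
    positivity
  set C : ℝ := Real.sqrt N * A + Real.sqrt N * (6 * K * (2*A) ^ (1 - 2*α)) with hCdef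
  have hC2 : 0 ≤ Real.sqrt N * (6 * K * (2*A) ^ (1 - 2*α)) := by
    apply mul_nonneg (Real.sqrt_nonneg _)
    apply mul_nonneg (by linarith)
    exact Real.rpow_nonneg (by linarith) _
  have hC1 : 0 ≤ Real.sqrt N * A := mul_nonneg (Real.sqrt_nonneg _) hA
  refine ⟨C, by linarith, ?_⟩
  intro ε hε Θ hΘ
  -- uniform speed bound
  have hspeed : ∀ Φ : EuclideanSpace ℝ (Fin N), ‖HvecEps N K α ε Ω Φ‖ ≤ Real.sqrt N * A :=
    fun Φ => euclid_norm_le _ A hA (comp_bound hK hα1 hα2 hε Ω Φ)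
  constructor
  · intro t _
    calc ‖HvecEps N K α ε Ω (Θ t)‖ ≤ Real.sqrt N * A := hspeed _
      _ ≤ C := by linarith
  · intro s hs t ht
    -- each component of Θ is A-Lipschitz on Ici 0
    have hlip : ∀ i, |Θ t i - Θ s i| ≤ A * |t - s| := by
      intro i
      have := (convex_Ici (0:ℝ)).norm_image_sub_le_of_norm_hasDerivWithin_le
        (f := fun u => Θ u i) (f' := fun u => HvecEps N K α ε Ω (Θ u) i)
        (fun u hu => hΘ u hu i)
        (fun u _ => by
          rw [Real.norm_eq_abs]; exact comp_bound hK hα1 hα2 hε Ω (Θ u) i)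
        hs ht
      simpa [Real.norm_eq_abs] using this
    have hβ : (0:ℝ) < 1 - 2*α := by linarith
    set Q : ℝ := |t - s| ^ (1 - 2*α) with hQdef
    have hQ0 : 0 ≤ Q := Real.rpow_nonneg (abs_nonneg _) _
    -- componentwise Hölder estimate
    have hcomp : ∀ i, |HvecEps N K α ε Ω (Θ t) i - HvecEps N K α ε Ω (Θ s) i|
        ≤ 6 * K * (2*A) ^ (1 - 2*α) * Q := by
      intro i
      have hN : (0:ℝ) < N := by exact_mod_cast i.pos
      have key : ∀ j : Fin N, |hkerEps α ε (Θ t j - Θ t i) - hkerEps α ε (Θ s j - Θ s i)|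
          ≤ 6 * ((2*A) ^ (1 - 2*α) * Q) := by
        intro j
        have h1 : |(Θ t j - Θ t i) - (Θ s j - Θ s i)| ≤ 2*A * |t - s| := by
          have a1 := hlip j
          have a2 := hlip i
          have b1 := abs_sub (Θ t j - Θ s j) (Θ t i - Θ s i)
          have e1 : |Θ t j - Θ s j| ≤ A * |t - s| := a1
          calc |(Θ t j - Θ t i) - (Θ s j - Θ s i)| = |(Θ t j - Θ s j) - (Θ t i - Θ s i)| := by
                ring_nf
            _ ≤ |Θ t j - Θ s j| + |Θ t i - Θ s i| := abs_sub _ _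
            _ ≤ 2*A * |t - s| := by linarith
        calc |hkerEps α ε (Θ t j - Θ t i) - hkerEps α ε (Θ s j - Θ s i)|
            ≤ 6 * |(Θ t j - Θ t i) - (Θ s j - Θ s i)| ^ (1 - 2*α) :=
              hker_holder hα1 hα2 ε hε _ _
          _ ≤ 6 * ((2*A) ^ (1 - 2*α) * Q) := by
              have c1 : |(Θ t j - Θ t i) - (Θ s j - Θ s i)| ^ (1 - 2*α)
                  ≤ (2*A * |t - s|) ^ (1 - 2*α) :=
                Real.rpow_le_rpow (abs_nonneg _) h1 hβ.le
              have c2 : (2*A * |t - s|) ^ (1 - 2*α) = (2*A) ^ (1 - 2*α) * Q := by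
                rw [hQdef, ← Real.mul_rpow (by linarith) (abs_nonneg _)]
              linarith [c1.trans_eq c2]
      have hdiff : HvecEps N K α ε Ω (Θ t) i - HvecEps N K α ε Ω (Θ s) i
          = (K / N) * ∑ j, (hkerEps α ε (Θ t j - Θ t i) - hkerEps α ε (Θ s j - Θ s i)) := by
        have e : (K/(N:ℝ)) * ∑ j, (hkerEps α ε (Θ t j - Θ t i) - hkerEps α ε (Θ s j - Θ s i))
            = (K/(N:ℝ)) * ∑ j, hkerEps α ε (Θ t j - Θ t i)
              - (K/(N:ℝ)) * ∑ j, hkerEps α ε (Θ s j - Θ s i) := by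
          rw [Finset.sum_sub_distrib, mul_sub]
        rw [e, HvecEps, HvecEps, PiLp.toLp_apply, PiLp.toLp_apply]
        ring
      rw [hdiff, abs_mul, abs_of_pos (by positivity : (0:ℝ) < K / N)]
      calc (K / N) * |∑ j, (hkerEps α ε (Θ t j - Θ t i) - hkerEps α ε (Θ s j - Θ s i))|
          ≤ (K / N) * ((N : ℝ) * (6 * ((2*A) ^ (1 - 2*α) * Q))) := by
            apply mul_le_mul_of_nonneg_left _ (by positivity : (0:ℝ) ≤ K / N)
            calc |∑ j, (hkerEps α ε (Θ t j - Θ t i) - hkerEps α ε (Θ s j - Θ s i))|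
                ≤ ∑ j, |hkerEps α ε (Θ t j - Θ t i) - hkerEps α ε (Θ s j - Θ s i)| :=
                  Finset.abs_sum_le_sum_abs _ _
              _ ≤ ∑ _j : Fin N, 6 * ((2*A) ^ (1 - 2*α) * Q) :=
                  Finset.sum_le_sum fun j _ => key j
              _ = (N : ℝ) * (6 * ((2*A) ^ (1 - 2*α) * Q)) := by
                  rw [Finset.sum_const, Finset.card_univ, Fintype.card_fin]
                  simp [nsmul_eq_mul]
        _ = 6 * K * (2*A) ^ (1 - 2*α) * Q := by field_simp
    -- assemble with the Euclidean norm
    have hvec : ∀ i, |(HvecEps N K α ε Ω (Θ t) - HvecEps N K α ε Ω (Θ s)) i|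
        ≤ 6 * K * (2*A) ^ (1 - 2*α) * Q := by
      intro i
      have : (HvecEps N K α ε Ω (Θ t) - HvecEps N K α ε Ω (Θ s)) i
          = HvecEps N K α ε Ω (Θ t) i - HvecEps N K α ε Ω (Θ s) i := rfl
      rw [this]; exact hcomp i
    have := euclid_norm_le (HvecEps N K α ε Ω (Θ t) - HvecEps N K α ε Ω (Θ s))
      (6 * K * (2*A) ^ (1 - 2*α) * Q)
      (by positivity) hvec
    calc ‖HvecEps N K α ε Ω (Θ t) - HvecEps N K α ε Ω (Θ s)‖
        ≤ Real.sqrt N * (6 * K * (2*A) ^ (1 - 2*α) * Q) := this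
      _ = (Real.sqrt N * (6 * K * (2*A) ^ (1 - 2*α))) * Q := by ring
      _ ≤ C * Q := mul_le_mul_of_nonneg_right (by linarith) hQ0
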